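/- arXiv:2212.12954 — 2 statements merged into one kernel-verified Lean document; each statement's English description precedes it below -/
import Mathlib

section
/- Let (W,𝒲) and (Y,𝒴) be measurable spaces, μ a probability measure on W, ν a σ-finite measure on Y, and κ, κ' two Markov kernels from W to Y such that for every w ∈ W the measures κ(w) and κ'(w) admit jointly measurable densities with respect to ν. Let μ ⊗ κ denote the probability on W×Y determined by (μ ⊗ κ)(A×B) = ∫_A κ(w)(B) dμ(w). Then the map w ↦ h²(κ(w), κ'(w)) is measurable and h²(μ ⊗ κ, μ ⊗ κ') = ∫_W h²(κ(w), κ'(w)) dμ(w). -/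
open MeasureTheory ProbabilityTheory
open scoped ENNReal

/-- Squared Hellinger distance `h²(P,Q)` between two measures
(computed with densities with respect to the dominating measure `P + Q`; it does not depend
on the choice of dominating measure). -/
noncomputable def hellingerSq {Y : Type*} [MeasurableSpace Y] (P Q : Measure Y) : ℝ :=
  (1 / 2) * ∫ y, (Real.sqrt ((P.rnDeriv (P + Q)) y).toReal
      - Real.sqrt ((Q.rnDeriv (P + Q)) y).toReal) ^ 2 ∂(P + Q)

/-- Pointwise squared-Hellinger integrand, as an `ℝ≥0∞`-valued function. -/
noncomputable def hellAux (a b : ℝ≥0∞) : ℝ≥0∞ :=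
  ENNReal.ofReal ((Real.sqrt a.toReal - Real.sqrt b.toReal) ^ 2)

lemma hellAux_le (a b : ℝ≥0∞) : hellAux a b ≤ a + b := by
  have h : (Real.sqrt a.toReal - Real.sqrt b.toReal) ^ 2 ≤ a.toReal + b.toReal := by
    have := Real.sq_sqrt a.toReal.toNNReal.2
    nlinarith [Real.sq_sqrt (ENNReal.toReal_nonneg : (0:ℝ) ≤ a.toReal),
      Real.sq_sqrt (ENNReal.toReal_nonneg : (0:ℝ) ≤ b.toReal),
      Real.sqrt_nonneg a.toReal, Real.sqrt_nonneg b.toReal,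
      mul_nonneg (Real.sqrt_nonneg a.toReal) (Real.sqrt_nonneg b.toReal)]
  calc hellAux a b ≤ ENNReal.ofReal (a.toReal + b.toReal) := ENNReal.ofReal_le_ofReal h
    _ ≤ ENNReal.ofReal a.toReal + ENNReal.ofReal b.toReal := ENNReal.ofReal_add_le
    _ ≤ a + b := add_le_add ENNReal.ofReal_toReal_le ENNReal.ofReal_toReal_le

lemma hellAux_mul (a b s : ℝ≥0∞) (ha : a ≠ ∞) (hb : b ≠ ∞) (hs : s ≠ ∞) :
    hellAux (s * a) (s * b) = hellAux a b * s := by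
  unfold hellAux
  rw [ENNReal.toReal_mul, ENNReal.toReal_mul, Real.sqrt_mul ENNReal.toReal_nonneg,
    Real.sqrt_mul ENNReal.toReal_nonneg, ← mul_sub, mul_pow, Real.sq_sqrt ENNReal.toReal_nonneg,
    mul_comm s.toReal, ENNReal.ofReal_mul (by positivity), ENNReal.ofReal_toReal hs]

lemma measurable_hellAux {α : Type*} [MeasurableSpace α] {p q : α → ℝ≥0∞}
    (hp : Measurable p) (hq : Measurable q) :
    Measurable (fun x => hellAux (p x) (q x)) := by
  apply Measurable.ennreal_ofReal
  exact ((Real.continuous_sqrt.measurable.comp hp.ennreal_toReal).sub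
    (Real.continuous_sqrt.measurable.comp hq.ennreal_toReal)).pow_const 2

/-- The squared Hellinger distance computed via densities w.r.t. any dominating measure. -/
lemma hellingerSq_withDensity {Y : Type*} [MeasurableSpace Y] (ρ : Measure Y)
    {p q : Y → ℝ≥0∞} (hp : Measurable p) (hq : Measurable q)
    (hpfin : ∫⁻ y, p y ∂ρ ≠ ∞) (hqfin : ∫⁻ y, q y ∂ρ ≠ ∞) :
    hellingerSq (ρ.withDensity p) (ρ.withDensity q)
      = (1 / 2) * (∫⁻ y, hellAux (p y) (q y) ∂ρ).toReal := by
  set P := ρ.withDensity p with hP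
  set Q := ρ.withDensity q with hQ
  have hPfin : IsFiniteMeasure P := isFiniteMeasure_withDensity hpfin
  have hQfin : IsFiniteMeasure Q := isFiniteMeasure_withDensity hqfin
  set σ := P + Q with hσdef
  have hσ : σ = ρ.withDensity (fun y => p y + q y) := by
    rw [hσdef, hP, hQ, ← withDensity_add_left hp]
    rfl
  set r := P.rnDeriv σ with hr
  set r' := Q.rnDeriv σ with hr'
  have hrm : Measurable r := Measure.measurable_rnDeriv _ _
  have hr'm : Measurable r' := Measure.measurable_rnDeriv _ _
  have hPac : P ≪ σ := Measure.absolutelyContinuous_of_le (Measure.le_add_right le_rfl)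
  have hQac : Q ≪ σ := Measure.absolutelyContinuous_of_le (Measure.le_add_left le_rfl)
  have hPr : σ.withDensity r = P := Measure.withDensity_rnDeriv_eq P σ hPac
  have hQr : σ.withDensity r' = Q := Measure.withDensity_rnDeriv_eq Q σ hQac
  have hpqm : Measurable (fun y => p y + q y) := hp.add hq
  -- p = (p+q) * r a.e.
  have key : ∀ {g : Y → ℝ≥0∞}, Measurable g → ∫⁻ y, g y ∂ρ ≠ ∞ →
      ∀ {u : Y → ℝ≥0∞}, Measurable u → σ.withDensity u = ρ.withDensity g →
      g =ᵐ[ρ] (fun y => (p y + q y) * u y) := by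
    intro g hg hgfin u hu heq
    have h2 : ρ.withDensity g = ρ.withDensity ((fun y => p y + q y) * u) := by
      rw [withDensity_mul _ hpqm hu, ← hσ, heq]
    exact (withDensity_eq_iff hg.aemeasurable (hpqm.mul hu).aemeasurable hgfin).mp h2
  have hpr : p =ᵐ[ρ] (fun y => (p y + q y) * r y) := key hp hpfin hrm hPr
  have hqr : q =ᵐ[ρ] (fun y => (p y + q y) * r' y) := key hq hqfin hr'm hQr
  have hrlt : ∀ᵐ y ∂σ, r y < ∞ := Measure.rnDeriv_lt_top P σ
  have hr'lt : ∀ᵐ y ∂σ, r' y < ∞ := Measure.rnDeriv_lt_top Q σ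
  have hrltρ : ∀ᵐ y ∂ρ, (p y + q y) ≠ 0 → r y < ∞ := by
    rw [← ae_withDensity_iff hpqm, ← hσ]; exact hrlt
  have hr'ltρ : ∀ᵐ y ∂ρ, (p y + q y) ≠ 0 → r' y < ∞ := by
    rw [← ae_withDensity_iff hpqm, ← hσ]; exact hr'lt
  have hpqlt : ∀ᵐ y ∂ρ, p y + q y < ∞ := by
    refine ae_lt_top hpqm ?_
    rw [lintegral_add_left hp]
    exact ENNReal.add_ne_top.mpr ⟨hpfin, hqfin⟩
  -- key integral identity
  have hint : ∫⁻ y, hellAux (r y) (r' y) ∂σ = ∫⁻ y, hellAux (p y) (q y) ∂ρ := by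
    rw [hσ, lintegral_withDensity_eq_lintegral_mul ρ hpqm (measurable_hellAux hrm hr'm)]
    refine lintegral_congr_ae ?_
    filter_upwards [hpr, hqr, hrltρ, hr'ltρ, hpqlt] with y h1 h2 h3 h4 h5
    simp only [Pi.mul_apply]
    by_cases h0 : p y + q y = 0
    · have hpy : p y = 0 := by rw [h1, h0, zero_mul]
      have hqy : q y = 0 := by rw [h2, h0, zero_mul]
      rw [h0, zero_mul, hpy, hqy]
      simp [hellAux]
    · have e1 : hellAux (p y) (q y) = hellAux ((p y + q y) * r y) ((p y + q y) * r' y) :=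
        congrArg₂ hellAux h1 h2
      rw [e1, hellAux_mul _ _ _ (h3 h0).ne (h4 h0).ne h5.ne]
      exact mul_comm _ _
  -- express hellingerSq via lintegral
  have hmeas : AEStronglyMeasurable
      (fun y => (Real.sqrt (r y).toReal - Real.sqrt (r' y).toReal) ^ 2) σ :=
    (((Real.continuous_sqrt.measurable.comp hrm.ennreal_toReal).sub
      (Real.continuous_sqrt.measurable.comp hr'm.ennreal_toReal)).pow_const 2).aestronglyMeasurable
  have : ∫ y, (Real.sqrt (r y).toReal - Real.sqrt (r' y).toReal) ^ 2 ∂σ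
      = (∫⁻ y, hellAux (r y) (r' y) ∂σ).toReal := by
    rw [integral_eq_lintegral_of_nonneg_ae (Filter.Eventually.of_forall fun y => sq_nonneg _)
      hmeas]
    rfl
  rw [hellingerSq, this, hint]

/-- `compProd` with a kernel given by densities is a `withDensity` of the product measure. -/
lemma compProd_eq_withDensity {W Y : Type*} [MeasurableSpace W] [MeasurableSpace Y]
    (μ : Measure W) [SFinite μ] (ν : Measure Y) [SigmaFinite ν]
    (κ : Kernel W Y) [IsSFiniteKernel κ] (f : W → Y → ℝ≥0∞)
    (hf : Measurable (Function.uncurry f)) (hκ : ∀ w, κ w = ν.withDensity (f w)) :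
    μ.compProd κ = (μ.prod ν).withDensity (Function.uncurry f) := by
  ext s hs
  rw [Measure.compProd_apply hs, withDensity_apply _ hs, ← lintegral_indicator hs,
    MeasureTheory.lintegral_prod _ ((hf.indicator hs).aemeasurable)]
  refine lintegral_congr fun w => ?_
  rw [hκ w, withDensity_apply _ (measurable_prodMk_left hs), ← lintegral_indicator
    (measurable_prodMk_left hs)]
  refine lintegral_congr fun y => ?_
  by_cases hy : (w, y) ∈ s
  · simp [Set.indicator_of_mem hy, Set.indicator_of_mem (Set.mem_preimage.mpr hy),
      Function.uncurry]
  · simp [Set.indicator_of_notMem hy, Set.indicator_of_notMem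
      (fun h => hy (Set.mem_preimage.mp h))]

/-- **Disintegration of the squared Hellinger distance.** Let `μ` be a probability on `W`,
`ν` a σ-finite measure on `Y`, and `κ`, `κ'` Markov kernels from `W` to `Y` whose values
admit jointly measurable densities with respect to `ν`. Then `w ↦ h²(κ(w), κ'(w))` is
measurable and `h²(μ ⊗ κ, μ ⊗ κ') = ∫_W h²(κ(w), κ'(w)) dμ(w)`. -/
theorem statement11 {W Y : Type*} [MeasurableSpace W] [MeasurableSpace Y]
    (μ : Measure W) [IsProbabilityMeasure μ] (ν : Measure Y) [SigmaFinite ν]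
    (κ κ' : Kernel W Y) [IsMarkovKernel κ] [IsMarkovKernel κ']
    (f f' : W → Y → ℝ≥0∞)
    (hf : Measurable (Function.uncurry f)) (hf' : Measurable (Function.uncurry f'))
    (hκ : ∀ w, κ w = ν.withDensity (f w)) (hκ' : ∀ w, κ' w = ν.withDensity (f' w)) :
    Measurable (fun w => hellingerSq (κ w) (κ' w)) ∧
    hellingerSq (μ.compProd κ) (μ.compProd κ') = ∫ w, hellingerSq (κ w) (κ' w) ∂μ := by
  have hfw : ∀ w, Measurable (f w) := fun w => hf.comp (measurable_prodMk_left)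
  have hf'w : ∀ w, Measurable (f' w) := fun w => hf'.comp (measurable_prodMk_left)
  have hfint : ∀ w, ∫⁻ y, f w y ∂ν = 1 := by
    intro w
    have := measure_univ (μ := κ w)
    rwa [hκ w, withDensity_apply _ MeasurableSet.univ, setLIntegral_univ] at this
  have hf'int : ∀ w, ∫⁻ y, f' w y ∂ν = 1 := by
    intro w
    have := measure_univ (μ := κ' w)
    rwa [hκ' w, withDensity_apply _ MeasurableSet.univ, setLIntegral_univ] at this
  set G : W → ℝ≥0∞ := fun w => ∫⁻ y, hellAux (f w y) (f' w y) ∂ν with hG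
  have h1 : ∀ w, hellingerSq (κ w) (κ' w) = (1 / 2) * (G w).toReal := by
    intro w
    rw [hκ w, hκ' w]
    exact hellingerSq_withDensity ν (hfw w) (hf'w w)
      (by rw [hfint w]; exact ENNReal.one_ne_top) (by rw [hf'int w]; exact ENNReal.one_ne_top)
  have hGmeas : Measurable G := by
    apply Measurable.lintegral_prod_right' (f := fun z : W × Y => hellAux (f z.1 z.2) (f' z.1 z.2))
    exact measurable_hellAux hf hf'
  have hGle : ∀ w, G w ≤ 2 := by
    intro w
    calc G w ≤ ∫⁻ y, f w y + f' w y ∂ν :=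
          lintegral_mono fun y => hellAux_le _ _
      _ = 2 := by rw [lintegral_add_left (hfw w), hfint w, hf'int w]; norm_num
  constructor
  · simp only [funext h1]
    exact (hGmeas.ennreal_toReal).const_mul _
  · -- LHS
    have hL : hellingerSq (μ.compProd κ) (μ.compProd κ')
        = (1 / 2) * (∫⁻ w, G w ∂μ).toReal := by
      rw [compProd_eq_withDensity μ ν κ f hf hκ, compProd_eq_withDensity μ ν κ' f' hf' hκ']
      have hFfin : ∫⁻ z, Function.uncurry f z ∂(μ.prod ν) ≠ ∞ := by
        rw [MeasureTheory.lintegral_prod _ hf.aemeasurable]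
        simp only [Function.uncurry]
        simp_rw [hfint]
        simp
      have hF'fin : ∫⁻ z, Function.uncurry f' z ∂(μ.prod ν) ≠ ∞ := by
        rw [MeasureTheory.lintegral_prod _ hf'.aemeasurable]
        simp only [Function.uncurry]
        simp_rw [hf'int]
        simp
      rw [hellingerSq_withDensity (μ.prod ν) hf hf' hFfin hF'fin,
        MeasureTheory.lintegral_prod _ (measurable_hellAux hf hf').aemeasurable]
      rfl
    rw [hL]
    simp_rw [h1]
    rw [integral_const_mul, integral_toReal hGmeas.aemeasurable
      (Filter.Eventually.of_forall fun w => lt_of_le_of_lt (hGle w) (by norm_num))]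
end

section
/- For all positive real numbers a, b and n, one has (a + b)·(9.11 + log₊(n/(a + b))) ≤ a·(9.11 + log₊(n/a)) + b·(9.11 + log₊(n/b)), where log₊(x) = max(log x, 0). Consequently, for any two partitions m1, m2, if y² ≥ η(D_n(m1) + D_n(m2)) with η ≥ 1, then y² ≥ η(|m1| + |m2|)·(9.11 + log₊(n/(|m1| + |m2|))), where D_n(m) = |m|(9.11 + log₊(n/|m|)). -/
/-- `log₊ x = max (log x) 0`. -/
noncomputable def logPlus (x : ℝ) : ℝ := max (Real.log x) 0

/-- A (finite) partition of `W`: nonempty pairwise disjoint cells covering `W`. -/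
def IsPartition {W : Type*} (m : Set (Set W)) : Prop :=
  m.Finite ∧ (∀ K ∈ m, K.Nonempty) ∧ m.PairwiseDisjoint id ∧ ⋃₀ m = Set.univ

/-- `D_n(m) = |m| (9.11 + log₊(n/|m|))`. -/
noncomputable def Dn {W : Type*} (n : ℕ) (m : Set (Set W)) : ℝ :=
  (m.ncard : ℝ) * (9.11 + logPlus ((n : ℝ) / (m.ncard : ℝ)))

lemma logPlus_mono {x y : ℝ} (hx : 0 ≤ x) (h : x ≤ y) : logPlus x ≤ logPlus y := by
  unfold logPlus
  rcases le_or_gt y 1 with hy | hy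
  · have : Real.log x ≤ 0 := Real.log_nonpos hx (h.trans hy)
    simp [max_eq_right this]
  · rcases hx.eq_or_lt with rfl | hx0
    · simp [Real.log_zero]
    · exact max_le_max (Real.log_le_log hx0 h) le_rfl

lemma key (a b n : ℝ) (ha : 0 < a) (hb : 0 < b) (hn : 0 ≤ n) :
    (a + b) * (9.11 + logPlus (n / (a + b))) ≤
      a * (9.11 + logPlus (n / a)) + b * (9.11 + logPlus (n / b)) := by
  have hab : 0 < a + b := by linarith
  have h1 : logPlus (n / (a + b)) ≤ logPlus (n / a) :=
    logPlus_mono (div_nonneg hn hab.le) (div_le_div_of_nonneg_left hn ha (by linarith))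
  have h2 : logPlus (n / (a + b)) ≤ logPlus (n / b) :=
    logPlus_mono (div_nonneg hn hab.le) (div_le_div_of_nonneg_left hn hb (by linarith))
  nlinarith

/-- **Superadditivity of `x ↦ x(9.11 + log₊(n/x))`.** For all positive reals `a, b, n`,
`(a+b)(9.11 + log₊(n/(a+b))) ≤ a(9.11 + log₊(n/a)) + b(9.11 + log₊(n/b))`. Consequently,
for partitions `m1, m2`, if `y² ≥ η (D_n(m1) + D_n(m2))` with `η ≥ 1`, then
`y² ≥ η (|m1| + |m2|)(9.11 + log₊(n/(|m1| + |m2|)))`. -/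
theorem statement16 :
    (∀ a b n : ℝ, 0 < a → 0 < b → 0 < n →
      (a + b) * (9.11 + logPlus (n / (a + b))) ≤
        a * (9.11 + logPlus (n / a)) + b * (9.11 + logPlus (n / b))) ∧
    (∀ (W : Type) [Nonempty W] (m1 m2 : Set (Set W)),
      IsPartition m1 → IsPartition m2 →
      ∀ (n : ℕ) (η y : ℝ), 1 ≤ η → η * (Dn n m1 + Dn n m2) ≤ y ^ 2 →
      η * ((m1.ncard : ℝ) + (m2.ncard : ℝ)) *
          (9.11 + logPlus ((n : ℝ) / ((m1.ncard : ℝ) + (m2.ncard : ℝ)))) ≤ y ^ 2) := by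
  constructor
  · exact fun a b n ha hb hn => key a b n ha hb hn.le
  · intro W _ m1 m2 hm1 hm2 n η y hη hy
    have hpos : ∀ (m : Set (Set W)), IsPartition m → 0 < (m.ncard : ℝ) := by
      intro m hm
      obtain ⟨hfin, -, -, hcov⟩ := hm
      have hne : m.Nonempty := by
        obtain ⟨w⟩ := ‹Nonempty W›
        have : w ∈ ⋃₀ m := hcov ▸ Set.mem_univ w
        obtain ⟨K, hK, -⟩ := this
        exact ⟨K, hK⟩
      exact_mod_cast (Set.ncard_pos hfin).mpr hne
    have h1 := hpos m1 hm1
    have h2 := hpos m2 hm2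
    have hk := key _ _ (n : ℝ) h1 h2 (Nat.cast_nonneg n)
    have hη0 : (0 : ℝ) ≤ η := by linarith
    calc η * ((m1.ncard : ℝ) + (m2.ncard : ℝ)) *
          (9.11 + logPlus ((n : ℝ) / ((m1.ncard : ℝ) + (m2.ncard : ℝ))))
        ≤ η * (Dn n m1 + Dn n m2) := by
          rw [mul_assoc]
          exact mul_le_mul_of_nonneg_left hk hη0
      _ ≤ y ^ 2 := hy
end
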